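/- For ε ∈ {0,1}, λ ≠ 0, and m = u_xx − εu, the zero-curvature equation (X_g)_t − (T_g)_x + [X_g, T_g] = 0 for the matrices X_g = (1/2)[[0, ελ + 2m],[1/λ, 0]] and T_g = (1/2)[[−u_x, −2um + ελu − ελ²],[−1 − u/λ, u_x]] holds if and only if u(x,t) satisfies m_t = −m_x u − 2m u_x. -/

import Mathlib

noncomputable section

/-- Partial derivative in the first variable. -/
def pdx (f : ℝ → ℝ → ℝ) (x t : ℝ) : ℝ := deriv (fun x' => f x' t) x

/-- Partial derivative in the second variable. -/
def pdt (f : ℝ → ℝ → ℝ) (x t : ℝ) : ℝ := deriv (fun t' => f x t') t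

/-- Smoothness of a function of two real variables. -/
def Smooth2 (f : ℝ → ℝ → ℝ) : Prop := ContDiff ℝ (⊤ : ℕ∞) (fun p : ℝ × ℝ => f p.1 p.2)

/-- m = u_xx - ε u -/
def mch (u : ℝ → ℝ → ℝ) (ε : ℝ) : ℝ → ℝ → ℝ := fun a b =>
  pdx (fun c d => pdx u c d) a b - ε * u a b

/-- Entrywise partial x-derivative of a matrix-valued function. -/
def Mpdx (M : ℝ → ℝ → Matrix (Fin 2) (Fin 2) ℝ) (x t : ℝ) : Matrix (Fin 2) (Fin 2) ℝ :=
  Matrix.of fun i j => pdx (fun a b => M a b i j) x t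

/-- Entrywise partial t-derivative of a matrix-valued function. -/
def Mpdt (M : ℝ → ℝ → Matrix (Fin 2) (Fin 2) ℝ) (x t : ℝ) : Matrix (Fin 2) (Fin 2) ℝ :=
  Matrix.of fun i j => pdt (fun a b => M a b i j) x t

/-- The matrix X_g of the CH/HS linear problem. -/
def chXg (u : ℝ → ℝ → ℝ) (ε lam : ℝ) : ℝ → ℝ → Matrix (Fin 2) (Fin 2) ℝ := fun x t =>
  (1 / 2 : ℝ) • !![0, ε * lam + 2 * mch u ε x t; 1 / lam, 0]

/-- The matrix T_g of the CH/HS linear problem. -/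
def chTg (u : ℝ → ℝ → ℝ) (ε lam : ℝ) : ℝ → ℝ → Matrix (Fin 2) (Fin 2) ℝ := fun x t =>
  (1 / 2 : ℝ) •
    !![ - pdx u x t,
        -2 * u x t * mch u ε x t + ε * lam * u x t - ε * lam ^ 2;
        -1 - u x t / lam,
        pdx u x t]

lemma sliceX {f : ℝ → ℝ → ℝ} (hf : Smooth2 f) (t : ℝ) : ContDiff ℝ (⊤ : ℕ∞) (fun x => f x t) :=
  hf.comp (contDiff_id.prodMk contDiff_const)

lemma sliceT {f : ℝ → ℝ → ℝ} (hf : Smooth2 f) (x : ℝ) : ContDiff ℝ (⊤ : ℕ∞) (fun t => f x t) :=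
  hf.comp (contDiff_const.prodMk contDiff_id)

lemma pdx_eq {f : ℝ → ℝ → ℝ} (hf : Smooth2 f) (x t : ℝ) :
    pdx f x t = fderiv ℝ (fun p : ℝ × ℝ => f p.1 p.2) (x, t) (1, 0) := by
  have h1 : HasFDerivAt (fun x' : ℝ => ((x', t) : ℝ × ℝ))
      ((ContinuousLinearMap.id ℝ ℝ).prod 0) x :=
    (hasFDerivAt_id x).prodMk (hasFDerivAt_const t x)
  have h2 := ((hf.differentiable (by simp) (x, t)).hasFDerivAt).comp x h1
  simpa [pdx, Function.comp_def] using h2.hasDerivAt.deriv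

lemma smooth2_pdx {f : ℝ → ℝ → ℝ} (hf : Smooth2 f) : Smooth2 (pdx f) := by
  have h : Smooth2 (fun x t => fderiv ℝ (fun p : ℝ × ℝ => f p.1 p.2) (x, t) (1, 0)) :=
    (hf.fderiv_right (by simp)).clm_apply contDiff_const
  have he : (fun p : ℝ × ℝ => pdx f p.1 p.2) = fun p : ℝ × ℝ =>
      fderiv ℝ (fun p : ℝ × ℝ => f p.1 p.2) (p.1, p.2) (1, 0) := by
    funext p; exact pdx_eq hf p.1 p.2
  unfold Smooth2 at *
  rw [he]; simpa using h

lemma smooth2_mch {u : ℝ → ℝ → ℝ} (hu : Smooth2 u) (ε : ℝ) : Smooth2 (mch u ε) := by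
  have h1 : Smooth2 (pdx (pdx u)) := smooth2_pdx (smooth2_pdx hu)
  unfold Smooth2 mch at *
  exact h1.sub (contDiff_const.mul hu)

lemma ch_hs_key (u : ℝ → ℝ → ℝ) (hu : Smooth2 u) (ε lam : ℝ) (hlam : lam ≠ 0) (x t : ℝ) :
    Mpdt (chXg u ε lam) x t - Mpdx (chTg u ε lam) x t
      + (chXg u ε lam x t * chTg u ε lam x t - chTg u ε lam x t * chXg u ε lam x t)
    = !![0, pdt (mch u ε) x t + pdx (mch u ε) x t * u x t + 2 * mch u ε x t * pdx u x t;
        0, 0] := by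
  have HU : HasDerivAt (fun x' => u x' t) (deriv (fun x' => u x' t) x) x :=
    (((sliceX hu t).differentiable (by simp)) x).hasDerivAt
  have HM : HasDerivAt (fun x' => mch u ε x' t) (deriv (fun x' => mch u ε x' t) x) x :=
    (((sliceX (smooth2_mch hu ε) t).differentiable (by simp)) x).hasDerivAt
  have hmval : mch u ε x t = deriv (deriv fun x' => u x' t) x - ε * u x t := rfl
  have h2 : deriv (fun x' => -(2 * u x' t * mch u ε x' t) + ε * lam * u x' t - ε * lam ^ 2) x
      = -((2 * deriv (fun x' => u x' t) x) * mch u ε x t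
          + (2 * u x t) * deriv (fun x' => mch u ε x' t) x)
        + ε * lam * deriv (fun x' => u x' t) x :=
    HasDerivAt.deriv ((((HU.const_mul 2).mul HM).neg.add (HU.const_mul (ε * lam))).sub_const
      (ε * lam ^ 2))
  have h3 : deriv (fun x' => -1 - u x' t / lam) x = -(deriv (fun x' => u x' t) x / lam) :=
    HasDerivAt.deriv ((HU.div_const lam).const_sub (-1))
  ext i j
  fin_cases i <;> fin_cases j <;>
    simp only [Mpdt, Mpdx, chXg, chTg, Matrix.mul_apply, Fin.sum_univ_two, pdt, pdx] <;>
    simp [Matrix.mul_apply, Fin.sum_univ_two]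
  · rw [hmval]; field_simp; ring
  · simp only [deriv_sub_const] at h2; rw [h2]; ring
  · ring
  · rw [show deriv (fun x' => deriv (fun y => u y t) x') x = mch u ε x t + ε * u x t from by
      rw [hmval]; ring]
    field_simp; ring

/-- the zero-curvature equation for (X_g, T_g) holds iff
u satisfies m_t = -m_x u - 2m u_x, m = u_xx - εu
(Camassa--Holm for ε = 1, Hunter--Saxton for ε = 0). -/
theorem ch_hs_zero_curvature (u : ℝ → ℝ → ℝ) (hu : Smooth2 u) (ε lam : ℝ)
    (hε : ε = 0 ∨ ε = 1) (hlam : lam ≠ 0) :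
    (∀ x t : ℝ,
        Mpdt (chXg u ε lam) x t - Mpdx (chTg u ε lam) x t
          + (chXg u ε lam x t * chTg u ε lam x t
              - chTg u ε lam x t * chXg u ε lam x t) = 0)
      ↔ (∀ x t : ℝ,
        pdt (mch u ε) x t
          = - pdx (mch u ε) x t * u x t - 2 * mch u ε x t * pdx u x t) := by
  constructor
  · intro h x t
    have hx := h x t
    rw [ch_hs_key u hu ε lam hlam x t] at hx
    have h01 := Matrix.ext_iff.2 hx 0 1
    simp at h01
    linarith
  · intro h x t
    rw [ch_hs_key u hu ε lam hlam x t]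
    have := h x t
    ext i j
    fin_cases i <;> fin_cases j <;> simp <;> linarith

end
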